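/- For all x, y ∈ (−1,1), lim_{N→∞} N · Σ_{n=N+1}^∞ U_n(x)·U_n(y) / (n(n+2)) equals 1/(2(1−x²)) if x = y, and equals 0 if x ≠ y. -/

import Mathlib

open Filter Topology

/-- The Chebyshev polynomials of the second kind. -/
noncomputable def chebyshevU : ℕ → ℝ → ℝ
  | 0 => fun _ => 1
  | 1 => fun x => 2 * x
  | (n + 2) => fun x => 2 * x * chebyshevU (n + 1) x - chebyshevU n x

open Real

/-- telescoping tsum -/
lemma my_tsum_telescope {f : ℕ → ℝ} (hs : Summable (fun n => f n - f (n + 1)))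
    (h0 : Tendsto f atTop (𝓝 0)) : ∑' n, (f n - f (n + 1)) = f 0 := by
  have h1 := hs.hasSum.tendsto_sum_nat
  simp only [Finset.sum_range_sub' f] at h1
  have h2 : Tendsto (fun n : ℕ => f 0 - f n) atTop (𝓝 (f 0)) := by
    simpa using tendsto_const_nhds.sub h0
  exact tendsto_nhds_unique h1 h2

lemma my_summable (α : ℝ) (N : ℕ) :
    Summable (fun n : ℕ => Real.cos (((n : ℝ) + N + 2) * α) *
      (1 / (((n : ℝ) + N + 1) * ((n : ℝ) + N + 3)))) := by
  have hbase : Summable (fun n : ℕ => 1 / ((n : ℝ) + 1) ^ 2) := by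
    have := (Real.summable_one_div_nat_pow (p := 2)).mpr one_lt_two
    have := (summable_nat_add_iff 1).mpr this
    refine this.congr fun n => ?_
    push_cast
    ring
  refine Summable.of_norm ?_
  refine Summable.of_nonneg_of_le (fun n => norm_nonneg _) (fun n => ?_) hbase
  have h1 : (0:ℝ) < (n : ℝ) + 1 := by positivity
  have h2 : (0:ℝ) < (n : ℝ) + N + 1 := by positivity
  have h3 : (0:ℝ) < (n : ℝ) + N + 3 := by positivity
  rw [Real.norm_eq_abs, abs_mul]
  calc |Real.cos (((n : ℝ) + N + 2) * α)| * |1 / (((n : ℝ) + N + 1) * ((n : ℝ) + N + 3))|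
      ≤ 1 * |1 / (((n : ℝ) + N + 1) * ((n : ℝ) + N + 3))| := by
        gcongr; exact Real.abs_cos_le_one _
    _ = 1 / (((n : ℝ) + N + 1) * ((n : ℝ) + N + 3)) := by
        rw [one_mul, abs_of_pos (by positivity)]
    _ ≤ 1 / ((n : ℝ) + 1) ^ 2 := by
        rw [div_le_div_iff₀ (by positivity) (by positivity)]
        nlinarith [Nat.cast_nonneg (α := ℝ) N, Nat.cast_nonneg (α := ℝ) n]

lemma tendsto_one_div_nat_add (c : ℝ) :
    Tendsto (fun n : ℕ => 1 / ((n : ℝ) + c)) atTop (𝓝 0) := by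
  have h : Tendsto (fun n : ℕ => (n : ℝ) + c) atTop atTop :=
    tendsto_atTop_add_const_right _ c tendsto_natCast_atTop_atTop
  simpa [one_div, Function.comp_def] using tendsto_inv_atTop_zero.comp h

lemma a_tendsto_zero (N : ℕ) :
    Tendsto (fun n : ℕ => 1 / (((n : ℝ) + N + 1) * ((n : ℝ) + N + 3))) atTop (𝓝 0) := by
  refine squeeze_zero (g := fun n : ℕ => 1 / ((n : ℝ) + 1)) (fun n => by positivity) (fun n => ?_)
    tendsto_one_div_add_atTop_nhds_zero_nat
  rw [div_le_div_iff₀ (by positivity) (by positivity)]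
  nlinarith [Nat.cast_nonneg (α := ℝ) N, Nat.cast_nonneg (α := ℝ) n]

lemma my_summable_a (N : ℕ) :
    Summable (fun n : ℕ => 1 / (((n : ℝ) + N + 1) * ((n : ℝ) + N + 3))) := by
  have := my_summable 0 N
  refine this.congr fun n => ?_
  simp

lemma G_zero (N : ℕ) :
    ∑' n : ℕ, 1 / (((n : ℝ) + N + 1) * ((n : ℝ) + N + 3)) =
      1 / 2 * (1 / ((N : ℝ) + 1) + 1 / ((N : ℝ) + 2)) := by
  set F : ℕ → ℝ := fun n => 1 / 2 * (1 / ((n : ℝ) + N + 1) + 1 / ((n : ℝ) + N + 2)) with hF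
  have hpt : ∀ n : ℕ, 1 / (((n : ℝ) + N + 1) * ((n : ℝ) + N + 3)) = F n - F (n + 1) := by
    intro n
    have h1 : (0:ℝ) < (n : ℝ) + N + 1 := by positivity
    have h2 : (0:ℝ) < (n : ℝ) + N + 2 := by positivity
    have h3 : (0:ℝ) < (n : ℝ) + N + 3 := by positivity
    simp only [hF]
    push_cast
    field_simp
    ring
  have hsum : Summable (fun n : ℕ => F n - F (n + 1)) :=
    (my_summable_a N).congr hpt
  have hlim : Tendsto F atTop (𝓝 0) := by
    have h1 := tendsto_one_div_nat_add ((N : ℝ) + 1)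
    have h2 := tendsto_one_div_nat_add ((N : ℝ) + 2)
    have : Tendsto (fun n : ℕ => 1 / 2 * (1 / ((n : ℝ) + (N + 1)) + 1 / ((n : ℝ) + (N + 2))))
        atTop (𝓝 (1 / 2 * (0 + 0))) := Tendsto.const_mul _ (h1.add h2)
    simpa [hF, add_assoc] using this
  calc ∑' n : ℕ, 1 / (((n : ℝ) + N + 1) * ((n : ℝ) + N + 3)) = ∑' n, (F n - F (n + 1)) :=
        tsum_congr hpt
    _ = F 0 := my_tsum_telescope hsum hlim
    _ = 1 / 2 * (1 / ((N : ℝ) + 1) + 1 / ((N : ℝ) + 2)) := by norm_num [hF]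

lemma G_bound (α : ℝ) (hs : Real.sin (α / 2) ≠ 0) (N : ℕ) :
    |∑' n : ℕ, Real.cos (((n : ℝ) + N + 2) * α) * (1 / (((n : ℝ) + N + 1) * ((n : ℝ) + N + 3)))| ≤
      1 / (|Real.sin (α / 2)| * (((N : ℝ) + 1) * ((N : ℝ) + 3))) := by
  set s := Real.sin (α / 2) with hsdef
  set A : ℕ → ℝ := fun n => 1 / (((n : ℝ) + N + 1) * ((n : ℝ) + N + 3)) with hA
  set g : ℕ → ℝ := fun n => Real.sin (((n : ℝ) + N + 3 / 2) * α) with hg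
  have hApos : ∀ n, 0 < A n := fun n => by positivity
  have hAmono : ∀ n, A (n + 1) ≤ A n := by
    intro n
    simp only [hA]
    push_cast
    rw [div_le_div_iff₀ (by positivity) (by positivity)]
    nlinarith [Nat.cast_nonneg (α := ℝ) N, Nat.cast_nonneg (α := ℝ) n]
  have hgle : ∀ n, |g n| ≤ 1 := fun n => Real.abs_sin_le_one _
  have key : ∀ n : ℕ, Real.cos (((n : ℝ) + N + 2) * α) * A n * (2 * s) =
      g (n + 1) * (A n - A (n + 1)) - (g n * A n - g (n + 1) * A (n + 1)) := by
    intro n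
    have hg1 : g (n + 1) = Real.sin (((n : ℝ) + N + 2) * α + α / 2) := by
      simp only [hg]; push_cast; ring_nf
    have hg0 : g n = Real.sin (((n : ℝ) + N + 2) * α - α / 2) := by
      simp only [hg]; push_cast; ring_nf
    rw [hg1, hg0, Real.sin_add, Real.sin_sub]
    ring
  -- summability facts
  have hdiff_nonneg : ∀ n, 0 ≤ A n - A (n + 1) := fun n => sub_nonneg.mpr (hAmono n)
  have summable_diff : Summable (fun n => A n - A (n + 1)) := by
    refine summable_of_sum_range_le (c := A 0) hdiff_nonneg (fun n => ?_)
    rw [Finset.sum_range_sub' A]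
    have := (hApos n).le
    linarith
  have tsum_diff : ∑' n : ℕ, (A n - A (n + 1)) = A 0 :=
    my_tsum_telescope summable_diff (a_tendsto_zero N)
  have hT1bound : ∀ n, ‖g (n + 1) * (A n - A (n + 1))‖ ≤ A n - A (n + 1) := by
    intro n
    rw [Real.norm_eq_abs, abs_mul, abs_of_nonneg (hdiff_nonneg n)]
    calc |g (n + 1)| * (A n - A (n + 1)) ≤ 1 * (A n - A (n + 1)) :=
          mul_le_mul_of_nonneg_right (hgle _) (hdiff_nonneg n)
      _ = A n - A (n + 1) := one_mul _
  have summable_T1 : Summable (fun n => g (n + 1) * (A n - A (n + 1))) := by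
    refine Summable.of_norm ?_
    exact Summable.of_nonneg_of_le (fun n => norm_nonneg _) hT1bound summable_diff
  have tsum_T1_bound : |∑' n : ℕ, g (n + 1) * (A n - A (n + 1))| ≤ A 0 := by
    calc |∑' n : ℕ, g (n + 1) * (A n - A (n + 1))| ≤ ∑' n : ℕ, ‖g (n + 1) * (A n - A (n + 1))‖ := by
          simpa using norm_tsum_le_tsum_norm (summable_T1.norm)
      _ ≤ ∑' n : ℕ, (A n - A (n + 1)) := Summable.tsum_le_tsum hT1bound summable_T1.norm summable_diff
      _ = A 0 := tsum_diff
  have summable_main : Summable (fun n : ℕ => Real.cos (((n : ℝ) + N + 2) * α) * A n * (2 * s)) :=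
    (my_summable α N).mul_right _
  have summable_main' : Summable (fun n => (g (n + 1) * (A n - A (n + 1)) -
      (g n * A n - g (n + 1) * A (n + 1)))) := summable_main.congr key
  have summable_T2 : Summable (fun n => g n * A n - g (n + 1) * A (n + 1)) := by
    have := summable_T1.sub summable_main'
    refine this.congr fun n => ?_
    ring
  have tendsto_H : Tendsto (fun n => g n * A n) atTop (𝓝 0) := by
    refine squeeze_zero_norm (fun n => ?_) (a_tendsto_zero N)
    rw [Real.norm_eq_abs, abs_mul, abs_of_pos (hApos n)]
    calc |g n| * A n ≤ 1 * A n := mul_le_mul_of_nonneg_right (hgle _) (hApos n).le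
      _ = A n := one_mul _
  have tsum_T2 : ∑' n : ℕ, (g n * A n - g (n + 1) * A (n + 1)) = g 0 * A 0 :=
    my_tsum_telescope summable_T2 tendsto_H
  have tsum_T2_bound : |∑' n : ℕ, (g n * A n - g (n + 1) * A (n + 1))| ≤ A 0 := by
    rw [tsum_T2, abs_mul, abs_of_pos (hApos 0)]
    calc |g 0| * A 0 ≤ 1 * A 0 := mul_le_mul_of_nonneg_right (hgle _) (hApos 0).le
      _ = A 0 := one_mul _
  -- main identity
  have hmain : (∑' n : ℕ, Real.cos (((n : ℝ) + N + 2) * α) * A n) * (2 * s) =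
      (∑' n : ℕ, g (n + 1) * (A n - A (n + 1))) - ∑' n : ℕ, (g n * A n - g (n + 1) * A (n + 1)) := by
    rw [← tsum_mul_right]
    rw [tsum_congr key]
    exact Summable.tsum_sub summable_T1 summable_T2
  have habs : |∑' n : ℕ, Real.cos (((n : ℝ) + N + 2) * α) * A n| * (2 * |s|) ≤ 2 * A 0 := by
    have h1 : |(∑' n : ℕ, Real.cos (((n : ℝ) + N + 2) * α) * A n) * (2 * s)| ≤ 2 * A 0 := by
      rw [hmain]
      calc |(∑' n : ℕ, g (n + 1) * (A n - A (n + 1))) -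
            ∑' n : ℕ, (g n * A n - g (n + 1) * A (n + 1))| ≤
            |∑' n : ℕ, g (n + 1) * (A n - A (n + 1))| +
            |∑' n : ℕ, (g n * A n - g (n + 1) * A (n + 1))| := abs_sub _ _
        _ ≤ A 0 + A 0 := add_le_add tsum_T1_bound tsum_T2_bound
        _ = 2 * A 0 := by ring
    calc |∑' n : ℕ, Real.cos (((n : ℝ) + N + 2) * α) * A n| * (2 * |s|)
        = |(∑' n : ℕ, Real.cos (((n : ℝ) + N + 2) * α) * A n) * (2 * s)| := by
          rw [abs_mul, abs_mul, abs_two]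
      _ ≤ 2 * A 0 := h1
  have hspos : 0 < |s| := abs_pos.mpr hs
  have hA0 : A 0 = 1 / (((N : ℝ) + 1) * ((N : ℝ) + 3)) := by norm_num [hA]
  have h2 : |∑' n : ℕ, Real.cos (((n : ℝ) + N + 2) * α) * A n| ≤ A 0 / |s| := by
    rw [le_div_iff₀ hspos]
    nlinarith [habs]
  have h3 : A 0 / |s| = 1 / (|s| * (((N : ℝ) + 1) * ((N : ℝ) + 3))) := by
    rw [hA0]; norm_num; ring
  rw [← h3]
  exact h2

lemma tendsto_NG_nonzero (α : ℝ) (hs : Real.sin (α / 2) ≠ 0) :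
    Tendsto (fun N : ℕ => (N : ℝ) * ∑' n : ℕ, Real.cos (((n : ℝ) + N + 2) * α) *
      (1 / (((n : ℝ) + N + 1) * ((n : ℝ) + N + 3)))) atTop (𝓝 0) := by
  have hspos : 0 < |Real.sin (α / 2)| := abs_pos.mpr hs
  refine squeeze_zero_norm (a := fun N : ℕ => 1 / |Real.sin (α / 2)| * (1 / ((N : ℝ) + 1)))
    (fun N => ?_) ?_
  · rw [Real.norm_eq_abs, abs_mul, abs_of_nonneg (Nat.cast_nonneg N)]
    calc (N : ℝ) * |∑' n : ℕ, Real.cos (((n : ℝ) + N + 2) * α) *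
          (1 / (((n : ℝ) + N + 1) * ((n : ℝ) + N + 3)))|
        ≤ (N : ℝ) * (1 / (|Real.sin (α / 2)| * (((N : ℝ) + 1) * ((N : ℝ) + 3)))) := by
          gcongr
          exact G_bound α hs N
      _ ≤ 1 / |Real.sin (α / 2)| * (1 / ((N : ℝ) + 1)) := by
          rw [mul_one_div, one_div_mul_one_div, div_le_div_iff₀ (by positivity) (by positivity)]
          nlinarith [mul_pos hspos (show (0:ℝ) < (N:ℝ) + 1 by positivity),
            Nat.cast_nonneg (α := ℝ) N]
  · have := (tendsto_one_div_nat_add 1).const_mul (1 / |Real.sin (α / 2)|)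
    simpa using this

lemma tendsto_NG_one :
    Tendsto (fun N : ℕ => (N : ℝ) * ∑' n : ℕ,
      (1 / (((n : ℝ) + N + 1) * ((n : ℝ) + N + 3)))) atTop (𝓝 1) := by
  have h : Tendsto (fun N : ℕ => 1 / 2 * ((N : ℝ) / ((N : ℝ) + 1)) +
      1 / 2 * ((N : ℝ) / ((N : ℝ) + 2))) atTop (𝓝 (1 / 2 * 1 + 1 / 2 * 1)) :=
    ((tendsto_natCast_div_add_atTop (1 : ℝ)).const_mul (1 / 2 : ℝ)).add
      ((tendsto_natCast_div_add_atTop (2 : ℝ)).const_mul (1 / 2 : ℝ))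
  norm_num at h
  refine h.congr fun N => ?_
  rw [G_zero N]
  field_simp

lemma chebyshevU_cos (θ : ℝ) : ∀ n : ℕ,
    chebyshevU n (Real.cos θ) * Real.sin θ = Real.sin (((n : ℝ) + 1) * θ) := by
  intro n
  induction n using Nat.twoStepInduction with
  | zero => simp [chebyshevU]
  | one =>
    simp only [chebyshevU]
    push_cast
    rw [show ((1 : ℝ) + 1) * θ = θ + θ by ring, Real.sin_add]
    ring
  | more n ih1 ih2 =>
    show (2 * Real.cos θ * chebyshevU (n + 1) (Real.cos θ) - chebyshevU n (Real.cos θ)) *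
        Real.sin θ = _
    have e1 : (((n + 2 : ℕ) : ℝ) + 1) * θ = ((n : ℝ) + 1 + 1) * θ + θ := by push_cast; ring
    have e2 : ((n : ℝ) + 1) * θ = ((n : ℝ) + 1 + 1) * θ - θ := by ring
    have h1 : chebyshevU (n + 1) (Real.cos θ) * Real.sin θ = Real.sin (((n : ℝ) + 1 + 1) * θ) := by
      have := ih2; push_cast at this ⊢; linarith [this]
    rw [e1, Real.sin_add]
    have h2 := ih1
    rw [e2, Real.sin_sub] at h2
    linear_combination 2 * Real.cos θ * h1 - h2

/-- Asymptotic error in the eigenfunction expansion of the Green's function associated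
with the Chebyshev polynomials of the second kind. -/
theorem truncated_green_chebyshevU_asymptotics (x y : ℝ)
    (hx : x ∈ Set.Ioo (-1 : ℝ) 1) (hy : y ∈ Set.Ioo (-1 : ℝ) 1) :
    Tendsto
      (fun N : ℕ => (N : ℝ) *
        ∑' n : ℕ,
          chebyshevU (n + N + 1) x * chebyshevU (n + N + 1) y /
            (((n + N + 1 : ℕ) : ℝ) * (((n + N + 1 : ℕ) : ℝ) + 2)))
      atTop
      (nhds (if x = y then 1 / (2 * (1 - x ^ 2)) else 0)) := by
  obtain ⟨hx1, hx2⟩ := hx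
  obtain ⟨hy1, hy2⟩ := hy
  set θ := Real.arccos x with hθdef
  set φ := Real.arccos y with hφdef
  have hθ0 : 0 < θ := Real.arccos_pos.mpr hx2
  have hθπ : θ < π := lt_of_le_of_ne (Real.arccos_le_pi x)
    (fun h => by have := Real.arccos_eq_pi.mp h; linarith)
  have hφ0 : 0 < φ := Real.arccos_pos.mpr hy2
  have hφπ : φ < π := lt_of_le_of_ne (Real.arccos_le_pi y)
    (fun h => by have := Real.arccos_eq_pi.mp h; linarith)
  have hcosθ : Real.cos θ = x := Real.cos_arccos hx1.le hx2.le
  have hcosφ : Real.cos φ = y := Real.cos_arccos hy1.le hy2.le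
  set s1 := Real.sin θ with hs1def
  set s2 := Real.sin φ with hs2def
  have hs1 : 0 < s1 := Real.sin_pos_of_pos_of_lt_pi hθ0 hθπ
  have hs2 : 0 < s2 := Real.sin_pos_of_pos_of_lt_pi hφ0 hφπ
  -- product formula
  have hcheb : ∀ m : ℕ, chebyshevU m x * chebyshevU m y =
      (Real.cos (((m : ℝ) + 1) * (θ - φ)) - Real.cos (((m : ℝ) + 1) * (θ + φ))) /
        (2 * s1 * s2) := by
    intro m
    have h1 : chebyshevU m x = Real.sin (((m : ℝ) + 1) * θ) / s1 := by
      rw [eq_div_iff hs1.ne', hs1def, ← hcosθ]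
      exact chebyshevU_cos θ m
    have h2 : chebyshevU m y = Real.sin (((m : ℝ) + 1) * φ) / s2 := by
      rw [eq_div_iff hs2.ne', hs2def, ← hcosφ]
      exact chebyshevU_cos φ m
    rw [h1, h2]
    have hAB1 : ((m : ℝ) + 1) * (θ - φ) = ((m : ℝ) + 1) * θ - ((m : ℝ) + 1) * φ := by ring
    have hAB2 : ((m : ℝ) + 1) * (θ + φ) = ((m : ℝ) + 1) * θ + ((m : ℝ) + 1) * φ := by ring
    rw [hAB1, hAB2, Real.cos_sub, Real.cos_add]
    field_simp
    ring
  -- pointwise term formula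
  have hterm : ∀ N n : ℕ,
      chebyshevU (n + N + 1) x * chebyshevU (n + N + 1) y /
        (((n + N + 1 : ℕ) : ℝ) * (((n + N + 1 : ℕ) : ℝ) + 2)) =
      (1 / (2 * s1 * s2)) *
        (Real.cos (((n : ℝ) + N + 2) * (θ - φ)) *
            (1 / (((n : ℝ) + N + 1) * ((n : ℝ) + N + 3))) -
          Real.cos (((n : ℝ) + N + 2) * (θ + φ)) *
            (1 / (((n : ℝ) + N + 1) * ((n : ℝ) + N + 3)))) := by
    intro N n
    have hm := hcheb (n + N + 1)
    rw [hm]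
    have e1 : (((n + N + 1 : ℕ) : ℝ) + 1) = ((n : ℝ) + N + 2) := by push_cast; ring
    have e2 : ((n + N + 1 : ℕ) : ℝ) = ((n : ℝ) + N + 1) := by push_cast; ring
    rw [e1, e2]
    have e3 : ((n : ℝ) + N + 1) + 2 = ((n : ℝ) + N + 3) := by ring
    rw [e3]
    ring
  -- tsum formula
  have htsum : ∀ N : ℕ,
      (∑' n : ℕ, chebyshevU (n + N + 1) x * chebyshevU (n + N + 1) y /
        (((n + N + 1 : ℕ) : ℝ) * (((n + N + 1 : ℕ) : ℝ) + 2))) =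
      (1 / (2 * s1 * s2)) *
        ((∑' n : ℕ, Real.cos (((n : ℝ) + N + 2) * (θ - φ)) *
            (1 / (((n : ℝ) + N + 1) * ((n : ℝ) + N + 3)))) -
          ∑' n : ℕ, Real.cos (((n : ℝ) + N + 2) * (θ + φ)) *
            (1 / (((n : ℝ) + N + 1) * ((n : ℝ) + N + 3)))) := by
    intro N
    rw [← Summable.tsum_sub (my_summable (θ - φ) N) (my_summable (θ + φ) N), ← tsum_mul_left]
    exact tsum_congr (hterm N)
  have hσ : Real.sin ((θ + φ) / 2) ≠ 0 := by
    have h1 : 0 < (θ + φ) / 2 := by linarith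
    have h2 : (θ + φ) / 2 < π := by linarith
    exact (Real.sin_pos_of_pos_of_lt_pi h1 h2).ne'
  have hGσ := tendsto_NG_nonzero (θ + φ) hσ
  by_cases hxy : x = y
  · -- equal case
    have hφθ : φ = θ := by rw [hφdef, hθdef, hxy]
    rw [if_pos hxy]
    have hGδ : Tendsto (fun N : ℕ => (N : ℝ) * ∑' n : ℕ,
        Real.cos (((n : ℝ) + N + 2) * (θ - φ)) *
          (1 / (((n : ℝ) + N + 1) * ((n : ℝ) + N + 3)))) atTop (𝓝 1) := by
      refine tendsto_NG_one.congr fun N => ?_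
      congr 1
      refine tsum_congr fun n => ?_
      rw [hφθ, sub_self, mul_zero, Real.cos_zero, one_mul]
    have hmain := (hGδ.sub hGσ).const_mul (1 / (2 * s1 * s2))
    have hval : 1 / (2 * s1 * s2) * (1 - 0) = 1 / (2 * (1 - x ^ 2)) := by
      have hsq : s1 ^ 2 = 1 - x ^ 2 := by
        rw [hs1def, Real.sin_sq, hcosθ]
      rw [hs2def, hφθ, ← hs1def, sub_zero, mul_one, ← hsq]
      ring
    rw [hval] at hmain
    refine hmain.congr fun N => ?_
    rw [htsum N]
    ring
  · -- unequal case
    rw [if_neg hxy]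
    have hδ : Real.sin ((θ - φ) / 2) ≠ 0 := by
      have h1 : -π < (θ - φ) / 2 := by linarith
      have h2 : (θ - φ) / 2 < π := by linarith
      rw [Ne, Real.sin_eq_zero_iff_of_lt_of_lt h1 h2]
      intro h
      have hθφ : θ = φ := by linarith
      apply hxy
      rw [← hcosθ, ← hcosφ, hθφ]
    have hGδ := tendsto_NG_nonzero (θ - φ) hδ
    have hmain := (hGδ.sub hGσ).const_mul (1 / (2 * s1 * s2))
    rw [sub_zero, mul_zero] at hmain
    refine hmain.congr fun N => ?_
    rw [htsum N]
    ring
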